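/- arXiv:1804.04373 — 2 statements merged into one kernel-verified Lean document; each statement's English description precedes it below -/
import Mathlib

section
/- For every positive integer k, there exists a binary linear code of dimension k with exactly 2^k - 1 distinct nonzero weights, i.e., all nonzero codewords have pairwise distinct Hamming weights. -/
/-!
Split the coordinates into blocks of sizes `1, 2, 4, …, 2^(k-1)` and encode `x ∈ 𝔽₂^k` by
repeating `x i` over the `i`-th block. The weight of the codeword of `x` is then
`∑_{x i ≠ 0} 2^i`, the number whose binary digits are `x`, so distinct messages have distinct
weights.
-/

open Finset

section HammingWeight

variable {ι κ β : Type*} [Fintype ι] [Fintype κ] [DecidableEq β] [Zero β]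

theorem hammingNorm_comp_equiv (e : κ ≃ ι) (x : ι → β) : hammingNorm (x ∘ e) = hammingNorm x :=
  card_equiv e (by simp)

theorem hammingNorm_comp_sigma_fst {γ : ι → Type*} [∀ i, Fintype (γ i)] (x : ι → β) :
    hammingNorm (fun p : (i : ι) × γ i => x p.1) =
      ∑ i ∈ univ.filter (x · ≠ 0), Fintype.card (γ i) := by
  classical
  simp_rw [← card_univ, ← card_sigma]
  exact congrArg card (by ext; simp)

theorem ncard_hammingNorm_of_injOn {S : Set (ι → β)} (h0 : 0 ∈ S) (h : S.InjOn hammingNorm) :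
    {w : ℕ | ∃ c ∈ S, c ≠ 0 ∧ hammingNorm c = w}.ncard = S.ncard - 1 := by
  have : {w : ℕ | ∃ c ∈ S, c ≠ 0 ∧ hammingNorm c = w} = hammingNorm '' (S \ {0}) := by
    ext; simp [and_assoc]
  rw [this, (h.mono Set.sdiff_subset).ncard_image, Set.ncard_sdiff_singleton_of_mem h0]

end HammingWeight

theorem ZMod.two_funext {ι : Type*} {x y : ι → ZMod 2} (h : ∀ i, x i ≠ 0 ↔ y i ≠ 0) : x = y := by
  have key : ∀ a b : ZMod 2, (a ≠ 0 ↔ b ≠ 0) → a = b := by decide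
  exact funext fun i => key _ _ (h i)

theorem sum_two_pow_val_injective (k : ℕ) :
    Function.Injective fun s : Finset (Fin k) => ∑ i ∈ s, 2 ^ (i : ℕ) := by
  intro s t h
  have himage : ∑ i ∈ s.image Fin.val, 2 ^ i = ∑ i ∈ t.image Fin.val, 2 ^ i := by
    simpa [sum_image Fin.val_injective.injOn] using h
  exact image_injective Fin.val_injective (geomSum_injective le_rfl himage)

def blockOf (k : ℕ) (j : Fin (∑ i : Fin k, 2 ^ (i : ℕ))) : Fin k := (finSigmaFinEquiv.symm j).1

theorem blockOf_surjective (k : ℕ) : Function.Surjective (blockOf k) :=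
  fun i => ⟨finSigmaFinEquiv ⟨i, ⟨0, Nat.two_pow_pos _⟩⟩, by simp [blockOf]⟩

noncomputable def blockRepeat (k : ℕ) :
    (Fin k → ZMod 2) →ₗ[ZMod 2] (Fin (∑ i : Fin k, 2 ^ (i : ℕ)) → ZMod 2) :=
  LinearMap.funLeft (ZMod 2) (ZMod 2) (blockOf k)

theorem blockRepeat_injective (k : ℕ) : Function.Injective (blockRepeat k) :=
  LinearMap.funLeft_injective_of_surjective _ _ _ (blockOf_surjective k)

theorem hammingNorm_blockRepeat {k : ℕ} (x : Fin k → ZMod 2) :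
    hammingNorm (blockRepeat k x) = ∑ i ∈ univ.filter (x · ≠ 0), 2 ^ (i : ℕ) := by
  calc hammingNorm (blockRepeat k x)
      = hammingNorm ((fun p : (i : Fin k) × Fin (2 ^ (i : ℕ)) => x p.1) ∘ finSigmaFinEquiv.symm) :=
        rfl
    _ = _ := by rw [hammingNorm_comp_equiv, hammingNorm_comp_sigma_fst]; simp

theorem hammingNorm_blockRepeat_injective (k : ℕ) :
    Function.Injective fun x => hammingNorm (blockRepeat k x) := by
  intro x y h
  simp only [hammingNorm_blockRepeat] at h
  exact ZMod.two_funext fun i => by simpa using Finset.ext_iff.1 (sum_two_pow_val_injective k h) i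

noncomputable def maxWeightSpectrumCode (k : ℕ) :
    Submodule (ZMod 2) (Fin (∑ i : Fin k, 2 ^ (i : ℕ)) → ZMod 2) :=
  LinearMap.range (blockRepeat k)

theorem finrank_maxWeightSpectrumCode (k : ℕ) :
    Module.finrank (ZMod 2) (maxWeightSpectrumCode k) = k := by
  rw [maxWeightSpectrumCode, LinearMap.finrank_range_of_inj (blockRepeat_injective k)]
  simp

theorem injOn_hammingNorm_maxWeightSpectrumCode (k : ℕ) :
    Set.InjOn hammingNorm (SetLike.coe (maxWeightSpectrumCode k)) := by
  rintro _ ⟨x, rfl⟩ _ ⟨y, rfl⟩ h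
  exact congrArg _ (hammingNorm_blockRepeat_injective k h)

theorem ncard_maxWeightSpectrumCode (k : ℕ) :
    (SetLike.coe (maxWeightSpectrumCode k)).ncard = 2 ^ k := by
  classical
  rw [← Nat.card_coe_set_eq, SetLike.coe_sort_coe, Nat.card_eq_fintype_card,
    Module.card_eq_pow_finrank (K := ZMod 2), finrank_maxWeightSpectrumCode, ZMod.card]

theorem binary_MWS_exists_general (k : ℕ) :
    ∃ (n : ℕ) (C : Submodule (ZMod 2) (Fin n → ZMod 2)), Module.finrank (ZMod 2) C = k ∧
      {w : ℕ | ∃ c ∈ C, c ≠ 0 ∧ hammingNorm c = w}.ncard = 2 ^ k - 1 ∧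
      ∀ c₁ ∈ C, ∀ c₂ ∈ C, c₁ ≠ 0 → c₂ ≠ 0 →
        hammingNorm c₁ = hammingNorm c₂ → c₁ = c₂ := by
  have hinj := injOn_hammingNorm_maxWeightSpectrumCode k
  refine ⟨_, maxWeightSpectrumCode k, finrank_maxWeightSpectrumCode k, ?_,
    fun c₁ h₁ c₂ h₂ _ _ h => hinj h₁ h₂ h⟩
  rw [← ncard_maxWeightSpectrumCode]
  exact ncard_hammingNorm_of_injOn (maxWeightSpectrumCode k).zero_mem hinj

theorem binary_MWS_exists (k : ℕ) (hk : 1 ≤ k) :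
    ∃ (n : ℕ) (C : Submodule (ZMod 2) (Fin n → ZMod 2)), Module.finrank (ZMod 2) C = k ∧
      {w : ℕ | ∃ c ∈ C, c ≠ 0 ∧ hammingNorm c = w}.ncard = 2 ^ k - 1 ∧
      ∀ c₁ ∈ C, ∀ c₂ ∈ C, c₁ ≠ 0 → c₂ ≠ 0 →
        hammingNorm c₁ = hammingNorm c₂ → c₁ = c₂ :=
  binary_MWS_exists_general k
end

section
/- Let C be a linear code over GF(q) and x a vector not in C such that the distances d(c,x), c ∈ C, are pairwise distinct. Then for the extended code of Lemma 1, the weight sets of the old part and new part are disjoint: every weight arising from a codeword involving the new generator row exceeds the maximum weight m of C, while every weight of the old codewords is at most m. -/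
/-- Pad a vector with `m` zeros at the end. -/
def padZeros {F : Type*} [Zero F] (m : ℕ) {n : ℕ} (v : Fin n → F) : Fin (n + m) → F :=
  Fin.append v 0

lemma hammingNorm_append' {F : Type*} [DecidableEq F] [Zero F] {n m : ℕ}
    (v : Fin n → F) (w : Fin m → F) :
    hammingNorm (Fin.append v w) = hammingNorm v + hammingNorm w := by
  simp only [hammingNorm, hammingDist, Pi.zero_apply]
  rw [Finset.card_filter, Finset.card_filter, Finset.card_filter, Fin.sum_univ_add]
  simp [Fin.append_left, Fin.append_right]

/-- `padZeros` as a linear map. -/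
def padLinear (F : Type*) [Field F] (m n : ℕ) : (Fin n → F) →ₗ[F] (Fin (n + m) → F) where
  toFun := padZeros m
  map_add' u v := by
    funext i
    refine Fin.addCases (fun j => ?_) (fun j => ?_) i <;>
      simp [padZeros, Fin.append_left, Fin.append_right]
  map_smul' a v := by
    funext i
    refine Fin.addCases (fun j => ?_) (fun j => ?_) i <;>
      simp [padZeros, Fin.append_left, Fin.append_right]

theorem old_new_weights_disjoint {F : Type*} [Field F] [Fintype F] [DecidableEq F]
    {n k m : ℕ} (C : Submodule F (Fin n → F)) (hk : Module.finrank F C = k)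
    (hm : IsGreatest {w : ℕ | ∃ c ∈ C, hammingNorm c = w} m)
    (x : Fin n → F) (hx : x ∉ C)
    (hdist : ∀ c₁ ∈ C, ∀ c₂ ∈ C, c₁ ≠ c₂ → hammingDist c₁ x ≠ hammingDist c₂ x) :
    (∀ z ∈ Submodule.span F (padZeros m '' (C : Set (Fin n → F)) ∪ {Fin.append x 1}),
      z ∈ padZeros m '' (C : Set (Fin n → F)) → hammingNorm z ≤ m) ∧
    (∀ z ∈ Submodule.span F (padZeros m '' (C : Set (Fin n → F)) ∪ {Fin.append x 1}),
      z ∉ padZeros m '' (C : Set (Fin n → F)) → m < hammingNorm z) ∧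
    Disjoint
      {w : ℕ | ∃ z ∈ Submodule.span F (padZeros m '' (C : Set (Fin n → F)) ∪ {Fin.append x 1}),
        z ∈ padZeros m '' (C : Set (Fin n → F)) ∧ hammingNorm z = w}
      {w : ℕ | ∃ z ∈ Submodule.span F (padZeros m '' (C : Set (Fin n → F)) ∪ {Fin.append x 1}),
        z ∉ padZeros m '' (C : Set (Fin n → F)) ∧ hammingNorm z = w} := by
  classical
  have hnormpad : ∀ v : Fin n → F, hammingNorm (padZeros m v) = hammingNorm v := by
    intro v
    simp [padZeros, hammingNorm_append']
  -- first claim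
  have h1 : ∀ z ∈ Submodule.span F (padZeros m '' (C : Set (Fin n → F)) ∪ {Fin.append x 1}),
      z ∈ padZeros m '' (C : Set (Fin n → F)) → hammingNorm z ≤ m := by
    rintro z _ ⟨c, hc, rfl⟩
    rw [hnormpad]
    exact hm.2 ⟨c, hc, rfl⟩
  -- span decomposition
  have himg : padZeros m '' (C : Set (Fin n → F)) = (Submodule.map (padLinear F m n) C : Set _) :=
    rfl
  have h2 : ∀ z ∈ Submodule.span F (padZeros m '' (C : Set (Fin n → F)) ∪ {Fin.append x 1}),
      z ∉ padZeros m '' (C : Set (Fin n → F)) → m < hammingNorm z := by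
    intro z hz hz'
    rw [Submodule.span_union, himg, Submodule.span_eq] at hz
    rcases Submodule.mem_sup.mp hz with ⟨y, hy, s, hs, rfl⟩
    rcases Submodule.mem_span_singleton.mp hs with ⟨a, rfl⟩
    rcases Submodule.mem_map.mp hy with ⟨c, hc, rfl⟩
    by_cases ha : a = 0
    · exfalso
      apply hz'
      subst ha
      simp only [zero_smul, add_zero]
      exact ⟨c, hc, rfl⟩
    · have hrepr : padLinear F m n c + a • Fin.append x 1
          = Fin.append (c + a • x) (fun _ : Fin m => a) := by
        funext i
        refine Fin.addCases (fun j => ?_) (fun j => ?_) i <;>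
          simp [padLinear, padZeros, Fin.append_left, Fin.append_right]
      rw [hrepr, hammingNorm_append']
      have hne : c + a • x ≠ 0 := by
        intro h0
        apply hx
        have h1 : a • x = -c := eq_neg_of_add_eq_zero_right h0
        have : x = (-a⁻¹) • c := by
          calc x = a⁻¹ • (a • x) := by rw [smul_smul, inv_mul_cancel₀ ha, one_smul]
            _ = a⁻¹ • (-c) := by rw [h1]
            _ = (-a⁻¹) • c := by rw [smul_neg, neg_smul]
        rw [this]
        exact C.smul_mem _ hc
      have hpos : 0 < hammingNorm (c + a • x) :=
        Nat.pos_of_ne_zero (fun h => hne (hammingNorm_eq_zero.mp h))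
      have hconst : hammingNorm (fun _ : Fin m => a) = m := by
        simp only [hammingNorm, hammingDist, Pi.zero_apply]
        rw [Finset.filter_true_of_mem (fun i _ => ha)]
        simp
      omega
  refine ⟨h1, h2, ?_⟩
  rw [Set.disjoint_left]
  rintro w ⟨z, hz, hzin, rfl⟩ ⟨z', hz', hz'nin, hw⟩
  have := h1 z hz hzin
  have := h2 z' hz' hz'nin
  omega
end
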